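/- Define φ(t) = g(t)·(1 + (2α)^{N−1} |g(t)|^{N(2α−1)})^{1/N} (that is, φ = g/g'). Then φ is differentiable on ℝ with φ'(t) = 1 + (2α − 1)·(2α)^{N−1}|g(t)|^{N(2α−1)} / (1 + (2α)^{N−1}|g(t)|^{N(2α−1)}) for every t; consequently 1 ≤ φ'(t) ≤ 2α for all t ∈ ℝ and |φ(t)| ≤ 2α|t| for all t ∈ ℝ. -/

import Mathlib

/-! With `c = (2α)^(N-1)` and `p = N(2α-1)`, `φ = F ∘ g` for `F y = y (1 + c|y|^p)^(1/N)`.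
By the chain rule `φ' = F'(g) g'`, and the factors `(1 + c|g|^p)^(±1/N)` cancel, leaving
`1 + (p/N) c|g|^p / (1 + c|g|^p)` with `p/N = 2α - 1`; this lies in `[1, 2α]`. Since `φ 0 = 0`,
the mean value theorem then gives `|φ t| ≤ 2α|t|`. -/

open Real Set

lemma ContinuousAt.hasDerivAt_id_mul {h : ℝ → ℝ} (hh : ContinuousAt h 0) :
    HasDerivAt (fun y => y * h y) (h 0) 0 := by
  rw [hasDerivAt_iff_tendsto_slope]
  refine (hh.tendsto.mono_left nhdsWithin_le_nhds).congr' ?_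
  filter_upwards [self_mem_nhdsWithin] with y (hy : y ≠ 0)
  rw [slope_def_field]
  field_simp
  ring

lemma hasDerivAt_abs_rpow_of_ne_zero {y : ℝ} (hy : y ≠ 0) (p : ℝ) :
    HasDerivAt (fun y => |y| ^ p) (p * |y| ^ p / y) y := by
  convert (hasDerivAt_abs hy).rpow_const (p := p) (Or.inl (abs_ne_zero.2 hy)) using 1
  rw [rpow_sub_one (abs_ne_zero.2 hy)]
  rcases hy.lt_or_gt with h | h
  · rw [sign_neg h, SignType.coe_neg_one, abs_of_neg h]; field_simp
  · rw [sign_pos h, SignType.coe_one, abs_of_pos h]; field_simp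

section OneAddMulAbsRpow

variable {c p : ℝ}

lemma one_le_one_add_mul_abs_rpow (hc : 0 ≤ c) (y : ℝ) : 1 ≤ 1 + c * |y| ^ p :=
  le_add_of_nonneg_right (mul_nonneg hc (rpow_nonneg (abs_nonneg y) p))

lemma hasDerivAt_mul_rpow_one_add_mul_abs_rpow (hc : 0 ≤ c) (hp : 0 < p) (r y : ℝ) :
    HasDerivAt (fun y => y * (1 + c * |y| ^ p) ^ r)
      ((1 + c * |y| ^ p) ^ r * (1 + r * p * (c * |y| ^ p) / (1 + c * |y| ^ p))) y := by
  have hA : ∀ y, 1 + c * |y| ^ p ≠ 0 := fun y =>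
    (zero_lt_one.trans_le (one_le_one_add_mul_abs_rpow hc y)).ne'
  rcases eq_or_ne y 0 with rfl | hy
  -- `|y|^p` need not be differentiable at `0`, but `y * h y` is for any `h` continuous there.
  · have hcont : ContinuousAt (fun y => (1 + c * |y| ^ p) ^ r) 0 :=
      (((continuous_abs.rpow_const fun _ => Or.inr hp.le).const_mul c).const_add 1).continuousAt
        |>.rpow_const (Or.inl (hA 0))
    convert hcont.hasDerivAt_id_mul using 1
    simp [zero_rpow hp.ne']
  · refine ((hasDerivAt_id' y).mul ((((hasDerivAt_abs_rpow_of_ne_zero hy p).const_mul c).const_add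
      1).rpow_const (p := r) (Or.inl (hA y)))).congr_deriv ?_
    rw [rpow_sub_one (hA y)]
    field_simp

end OneAddMulAbsRpow

lemma one_add_mul_div_one_add_mem_Icc {k x : ℝ} (hk : 0 ≤ k) (hx : 0 ≤ x) :
    1 + k * x / (1 + x) ∈ Icc 1 (1 + k) := by
  have hkx : k * x / (1 + x) ≤ k := by
    rw [div_le_iff₀ (by positivity)]; nlinarith
  constructor <;> [exact le_add_of_nonneg_right (by positivity); linarith]

lemma abs_le_mul_abs_of_hasDerivAt {f f' : ℝ → ℝ} {C : ℝ} (hf : ∀ t, HasDerivAt f (f' t) t)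
    (hf0 : f 0 = 0) (hC : ∀ t, |f' t| ≤ C) (t : ℝ) : |f t| ≤ C * |t| := by
  simpa [hf0] using convex_univ.norm_image_sub_le_of_norm_hasDerivWithin_le
    (fun x _ => (hf x).hasDerivWithinAt) (fun x _ => hC x) (mem_univ 0) (mem_univ t)

theorem g_test_function_estimates_general (N : ℕ) (hN : 2 ≤ N) (α : ℝ) (hα : 1 / 2 < α)
    (g : ℝ → ℝ) (hg_diff : Differentiable ℝ g) (hg_zero : g 0 = 0)
    (hg_deriv : ∀ t : ℝ, deriv g t =
      (1 + (2 * α) ^ ((N : ℝ) - 1) * |g t| ^ ((N : ℝ) * (2 * α - 1))) ^ (-(1 / (N : ℝ))))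
    (φ : ℝ → ℝ) (hφ : ∀ t : ℝ, φ t =
      g t * (1 + (2 * α) ^ ((N : ℝ) - 1) * |g t| ^ ((N : ℝ) * (2 * α - 1))) ^ ((1 : ℝ) / (N : ℝ)))
    : (∀ t : ℝ, HasDerivAt φ
        (1 + (2 * α - 1) * (2 * α) ^ ((N : ℝ) - 1) * |g t| ^ ((N : ℝ) * (2 * α - 1)) /
          (1 + (2 * α) ^ ((N : ℝ) - 1) * |g t| ^ ((N : ℝ) * (2 * α - 1)))) t) ∧
      (∀ t : ℝ, 1 ≤ deriv φ t ∧ deriv φ t ≤ 2 * α) ∧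
      (∀ t : ℝ, |φ t| ≤ 2 * α * |t|) := by
  set c : ℝ := (2 * α) ^ ((N : ℝ) - 1)
  set p : ℝ := (N : ℝ) * (2 * α - 1)
  have hc : 0 ≤ c := rpow_nonneg (by linarith) _
  have hN_pos : (0 : ℝ) < N := by exact_mod_cast (by omega : 0 < N)
  have hp : 0 < p := mul_pos hN_pos (by linarith)
  have hφ_comp : φ = (fun y => y * (1 + c * |y| ^ p) ^ ((1 : ℝ) / N)) ∘ g := funext hφ
  have hφ' : ∀ t, HasDerivAt φ (1 + (2 * α - 1) * c * |g t| ^ p / (1 + c * |g t| ^ p)) t := by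
    intro t
    rw [hφ_comp]
    refine ((hasDerivAt_mul_rpow_one_add_mul_abs_rpow hc hp _ (g t)).comp t
      (hg_diff t).hasDerivAt).congr_deriv ?_
    rw [hg_deriv t, rpow_neg (zero_le_one.trans (one_le_one_add_mul_abs_rpow hc _))]
    field_simp
    ring
  have hφ'_mem : ∀ t, 1 + (2 * α - 1) * c * |g t| ^ p / (1 + c * |g t| ^ p) ∈ Icc 1 (2 * α) := by
    intro t
    have h := one_add_mul_div_one_add_mem_Icc (k := 2 * α - 1) (by linarith)
      (mul_nonneg hc (rpow_nonneg (abs_nonneg (g t)) p))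
    rwa [add_sub_cancel, ← mul_assoc] at h
  refine ⟨hφ', fun t => (hφ' t).deriv ▸ hφ'_mem t, abs_le_mul_abs_of_hasDerivAt hφ' ?_ ?_⟩
  · simp [hφ, hg_zero]
  · intro t
    rw [abs_of_pos (zero_lt_one.trans_le (hφ'_mem t).1)]
    exact (hφ'_mem t).2

theorem g_test_function_estimates (N : ℕ) (hN : 2 ≤ N) (α : ℝ) (hα : 1 / 2 < α)
    (g : ℝ → ℝ) (hg_diff : Differentiable ℝ g) (hg_zero : g 0 = 0)
    (hg_odd : ∀ t : ℝ, g (-t) = -g t)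
    (hg_deriv : ∀ t : ℝ, deriv g t =
      (1 + (2 * α) ^ ((N : ℝ) - 1) * |g t| ^ ((N : ℝ) * (2 * α - 1))) ^ (-(1 / (N : ℝ))))
    (φ : ℝ → ℝ) (hφ : ∀ t : ℝ, φ t =
      g t * (1 + (2 * α) ^ ((N : ℝ) - 1) * |g t| ^ ((N : ℝ) * (2 * α - 1))) ^ ((1 : ℝ) / (N : ℝ)))
    : (∀ t : ℝ, HasDerivAt φ
        (1 + (2 * α - 1) * (2 * α) ^ ((N : ℝ) - 1) * |g t| ^ ((N : ℝ) * (2 * α - 1)) /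
          (1 + (2 * α) ^ ((N : ℝ) - 1) * |g t| ^ ((N : ℝ) * (2 * α - 1)))) t) ∧
      (∀ t : ℝ, 1 ≤ deriv φ t ∧ deriv φ t ≤ 2 * α) ∧
      (∀ t : ℝ, |φ t| ≤ 2 * α * |t|) :=
  g_test_function_estimates_general N hN α hα g hg_diff hg_zero hg_deriv φ hφ
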